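/- arXiv:1211.6871 — 2 statements merged into one kernel-verified Lean document; each statement's English description precedes it below -/
import Mathlib

section
/- Let (R, m) be a commutative local ring with maximal ideal m and let I be a proper ideal of R. Then the double D(R, I) = {(a, b) ∈ R × R : a − b ∈ I}, a subring of R × R, is a local ring whose maximal ideal is {(a, b) ∈ D(R, I) : a ∈ m} (equivalently, {(a, b) ∈ D(R, I) : a ∈ m and b ∈ m}). -/
/-! `D(R, I)` is the pullback of `R → R/I ← R`. For a proper ideal of a local ring the quotient map
`R → R/I` reflects units, hence so does the first projection `D(R, I) → R`; a ring with a
unit-reflecting map to a local ring is local, with maximal ideal the preimage of `𝔪`. -/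

/-- The double `D(R, I) = {(a, b) ∈ R × R : a − b ∈ I}` of a ring `R` along an
ideal `I`, as a subring of `R × R`. -/
def Double (R : Type*) [CommRing R] (I : Ideal R) : Subring (R × R) where
  carrier := {x | x.1 - x.2 ∈ I}
  mul_mem' := by
    intro x y hx hy
    simp only [Set.mem_setOf_eq, Prod.fst_mul, Prod.snd_mul] at *
    have h : x.1 * y.1 - x.2 * y.2 = x.1 * (y.1 - y.2) + (x.1 - x.2) * y.2 := by ring
    rw [h]
    exact I.add_mem (I.mul_mem_left _ hy) (I.mul_mem_right _ hx)
  one_mem' := by simp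
  add_mem' := by
    intro x y hx hy
    simp only [Set.mem_setOf_eq, Prod.fst_add, Prod.snd_add] at *
    have h : x.1 + y.1 - (x.2 + y.2) = (x.1 - x.2) + (y.1 - y.2) := by ring
    rw [h]
    exact I.add_mem hx hy
  zero_mem' := by simp
  neg_mem' := by
    intro x hx
    simp only [Set.mem_setOf_eq, Prod.fst_neg, Prod.snd_neg] at *
    have h : -x.1 - -x.2 = -(x.1 - x.2) := by ring
    rw [h]
    exact I.neg_mem hx

namespace Double

variable (R : Type*) [CommRing R] (I : Ideal R)

theorem eq_pullback :
    Double R I = (Ideal.Quotient.mk I).pullback (Ideal.Quotient.mk I) := by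
  ext x
  exact Ideal.Quotient.eq.symm

def fst : Double R I →+* R :=
  (RingHom.fst R R).comp (Double R I).subtype

instance isLocalHom_fst [IsLocalHom (Ideal.Quotient.mk I)] : IsLocalHom (fst R I) where
  map_nonunit x hx :=
    (isUnit_map_iff (RingEquiv.subringCongr (eq_pullback R I)) x).mp
      (IsLocalHom.map_nonunit (f := (Ideal.Quotient.mk I).pullbackFst (Ideal.Quotient.mk I))
        _ hx)

variable {R I}

theorem fst_mem_iff_snd_mem {J : Ideal R} (hIJ : I ≤ J) (x : Double R I) :
    (x : R × R).1 ∈ J ↔ (x : R × R).2 ∈ J := by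
  have hx : (x : R × R).1 - (x : R × R).2 ∈ J := hIJ x.2
  exact ⟨fun h => by simpa using sub_mem h hx, fun h => by simpa using add_mem hx h⟩

end Double

/-- if `(R, 𝔪)` is a commutative local ring and `I` a proper ideal,
then the double `D(R, I)` is a local ring, with maximal ideal
`{(a, b) ∈ D(R, I) : a ∈ 𝔪}`, equivalently `{(a, b) ∈ D(R, I) : a ∈ 𝔪 ∧ b ∈ 𝔪}`. -/
theorem double_isLocalRing
    (R : Type*) [CommRing R] [IsLocalRing R]
    (I : Ideal R) (hI : I ≠ ⊤) :
    ∃ h : IsLocalRing (Double R I),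
      (∀ x : Double R I,
        x ∈ @IsLocalRing.maximalIdeal (Double R I) _ h ↔
          (x : R × R).1 ∈ IsLocalRing.maximalIdeal R) ∧
      (∀ x : Double R I,
        x ∈ @IsLocalRing.maximalIdeal (Double R I) _ h ↔
          ((x : R × R).1 ∈ IsLocalRing.maximalIdeal R ∧
            (x : R × R).2 ∈ IsLocalRing.maximalIdeal R)) := by
  have : Nontrivial (R ⧸ I) := Ideal.Quotient.nontrivial_iff.mpr hI
  have : IsLocalHom (Ideal.Quotient.mk I) := .of_surjective _ Ideal.Quotient.mk_surjective
  let _ := (Double.fst R I).domain_isLocalRing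
  have hmax (x : Double R I) :
      x ∈ IsLocalRing.maximalIdeal (Double R I) ↔
        (x : R × R).1 ∈ IsLocalRing.maximalIdeal R := by
    rw [← IsLocalRing.maximalIdeal_comap (Double.fst R I)]
    rfl
  refine ⟨inferInstance, hmax, fun x => ?_⟩
  rw [hmax, ← Double.fst_mem_iff_snd_mem (IsLocalRing.le_maximalIdeal hI) x, and_self]
end

section
/- Let R be a commutative ring and I an ideal of R such that the quotient map q : R → R/I is a retract, i.e. there is a ring homomorphism f : R/I → R with q ∘ f = id. Let n ≥ 3 and let v ∈ Um_n(R, I) be such that v·ε = e_1 for some ε ∈ E_n(R). Then there exists ε' ∈ E_n(R, I) with v·ε' = e_1; that is, if the class of v is trivial in Um_n(R)/E_n(R), then it is trivial in Um_n(R, I)/E_n(R, I). -/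
/-!
Let `φ = f ∘ q : R → R`. It is a ring endomorphism with `φ x ≡ x (mod I)`, and `φ v = e₁`
because `v ≡ e₁ (mod I)`. Applying `φ` to `v ε = e₁` gives `e₁ φ(ε) = e₁`, so
`ε' = ε φ(ε)⁻¹` satisfies `v ε' = e₁ φ(ε)⁻¹ = e₁`. It remains to see `ε φ(ε)⁻¹ ∈ E_n(R, I)`.
On a generator, `E_ij(c) E_ij(-φ c) = E_ij(c - φ c)` with `c - φ c ∈ I`, and for `n ≥ 3` the
Steinberg relation `[E_ik(c), E_kj(x)] = E_ij(cx)` moves `E_21(x)` to every position, so all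
`E_ij(x)`, `x ∈ I`, lie in `E_n(R, I)`. The general case follows from the cocycle identity
`gh φ(gh)⁻¹ = g (h φ(h)⁻¹) g⁻¹ · g φ(g)⁻¹` and normality of `E_n(R, I)` in `E_n(R)`.
-/

open Matrix

def Um (n : ℕ) (R : Type*) [CommRing R] : Set (Fin n → R) :=
  {v | ∃ w : Fin n → R, ∑ i, v i * w i = 1}

def UmRel (n : ℕ) (R : Type*) [CommRing R] (I : Ideal R) : Set (Fin n → R) :=
  {v | v ∈ Um n R ∧ ∀ i : Fin n, if i.val = 0 then v i - 1 ∈ I else v i ∈ I}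

def Elem (n : ℕ) (R : Type*) [CommRing R] : Subgroup (GL (Fin n) R) :=
  Subgroup.closure {g | ∃ i j : Fin n, i ≠ j ∧ ∃ c : R,
    (g : Matrix (Fin n) (Fin n) R) = Matrix.transvection i j c}

def ElemRel (n : ℕ) (R : Type*) [CommRing R] (I : Ideal R) : Subgroup (GL (Fin n) R) :=
  Subgroup.closure {g | ∃ e ∈ Elem n R, ∃ h : GL (Fin n) R, ∃ i j : Fin n,
    i.val = 1 ∧ j.val = 0 ∧
    (∃ x ∈ I, (h : Matrix (Fin n) (Fin n) R) = Matrix.transvection i j x) ∧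
    g = e * h * e⁻¹}

def rowE1 (n : ℕ) (R : Type*) [CommRing R] : Fin n → R :=
  fun i => if i.val = 0 then 1 else 0

section Transvection

variable {ι R : Type*} [Fintype ι] [DecidableEq ι] [CommRing R] {i j k : ι}

def transvectionGL (hij : i ≠ j) (c : R) : GL ι R where
  val := transvection i j c
  inv := transvection i j (-c)
  val_inv := by rw [transvection_mul_transvection_same i j hij, add_neg_cancel, transvection_zero]
  inv_val := by rw [transvection_mul_transvection_same i j hij, neg_add_cancel, transvection_zero]

@[simp]
lemma coe_transvectionGL (hij : i ≠ j) (c : R) :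
    (transvectionGL hij c : Matrix ι ι R) = transvection i j c := rfl

lemma transvectionGL_mul_transvectionGL (hij : i ≠ j) (a b : R) :
    transvectionGL hij a * transvectionGL hij b = transvectionGL hij (a + b) :=
  Units.ext (transvection_mul_transvection_same i j hij a b)

lemma inv_transvectionGL (hij : i ≠ j) (a : R) :
    (transvectionGL hij a)⁻¹ = transvectionGL hij (-a) :=
  Units.ext rfl

lemma map_transvectionGL {S : Type*} [CommRing S] (φ : R →+* S) (hij : i ≠ j) (c : R) :
    GeneralLinearGroup.map φ (transvectionGL hij c) = transvectionGL hij (φ c) := by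
  ext a b
  simp [transvection, Matrix.single_apply, Matrix.one_apply, apply_ite φ]

lemma transvection_mul_transvection_of_ne (hij : i ≠ j) (hkj : k ≠ j) (c x : R) :
    transvection i k c * transvection k j x =
      transvection i j (c * x) * (transvection k j x * transvection i k c) := by
  simp only [transvection, Matrix.add_mul, Matrix.mul_add, Matrix.one_mul, Matrix.mul_one,
    single_mul_single_same, single_mul_single_of_ne (c := c * x) i j k hkj.symm x,
    single_mul_single_of_ne (c := c * x) i j i hij.symm c,
    single_mul_single_of_ne (c := x) k j i hij.symm c, add_zero]
  abel

lemma transvectionGL_commutator (hij : i ≠ j) (hik : i ≠ k) (hkj : k ≠ j) (c x : R) :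
    transvectionGL hik c * transvectionGL hkj x * (transvectionGL hik c)⁻¹ *
      (transvectionGL hkj x)⁻¹ = transvectionGL hij (c * x) := by
  have h : transvectionGL hik c * transvectionGL hkj x =
      transvectionGL hij (c * x) * (transvectionGL hkj x * transvectionGL hik c) :=
    Units.ext (transvection_mul_transvection_of_ne hij hkj c x)
  rw [h]
  group

end Transvection

lemma vecMul_inv_eq_of_vecMul_eq {ι R : Type*} [Fintype ι] [DecidableEq ι] [CommRing R]
    {g : GL ι R} {w : ι → R} (h : w ᵥ* (g : Matrix ι ι R) = w) : w ᵥ* (g⁻¹ : GL ι R) = w := by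
  conv_lhs => rw [← h]
  rw [vecMul_vecMul, ← Units.val_mul, mul_inv_cancel, Units.val_one, vecMul_one]

section Elementary

variable {R : Type*} [CommRing R] {n : ℕ} {I : Ideal R} {i j k : Fin n}

lemma transvectionGL_mem_elem (hij : i ≠ j) (c : R) : transvectionGL hij c ∈ Elem n R :=
  Subgroup.subset_closure ⟨i, j, hij, c, rfl⟩

lemma conj_mem_elemRel {g h : GL (Fin n) R} (hg : g ∈ Elem n R) (hh : h ∈ ElemRel n R I) :
    g * h * g⁻¹ ∈ ElemRel n R I := by
  suffices ElemRel n R I ≤ (ElemRel n R I).comap (MulAut.conj g).toMonoidHom from this hh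
  refine (Subgroup.closure_le _).2 ?_
  rintro _ ⟨e, he, t, i, j, hi, hj, ht, rfl⟩
  exact Subgroup.subset_closure ⟨g * e, mul_mem hg he, t, i, j, hi, hj, ht, by simp [mul_assoc]⟩

lemma transvectionGL_mem_elemRel_of_row (hij : i ≠ j) (hik : i ≠ k) (hkj : k ≠ j)
    (hk : ∀ x ∈ I, transvectionGL hkj x ∈ ElemRel n R I) {x : R} (hx : x ∈ I) :
    transvectionGL hij x ∈ ElemRel n R I := by
  rw [← one_mul x, ← transvectionGL_commutator hij hik hkj]
  exact mul_mem (conj_mem_elemRel (transvectionGL_mem_elem hik 1) (hk x hx)) (inv_mem (hk x hx))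

lemma transvectionGL_mem_elemRel_of_col (hij : i ≠ j) (hik : i ≠ k) (hkj : k ≠ j)
    (hk : ∀ x ∈ I, transvectionGL hik x ∈ ElemRel n R I) {x : R} (hx : x ∈ I) :
    transvectionGL hij x ∈ ElemRel n R I := by
  rw [← mul_one x, ← transvectionGL_commutator hij hik hkj, mul_assoc, mul_assoc,
    ← mul_assoc (transvectionGL hkj 1)]
  exact mul_mem (hk x hx) (conj_mem_elemRel (transvectionGL_mem_elem hkj 1) (inv_mem (hk x hx)))

lemma transvectionGL_mem_elemRel_of_ne_fst {a b : Fin n} (hab : a ≠ b) (hij : i ≠ j)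
    (hja : j ≠ a) (h : ∀ x ∈ I, transvectionGL hab x ∈ ElemRel n R I) :
    ∀ x ∈ I, transvectionGL hij x ∈ ElemRel n R I := by
  have haj : ∀ x ∈ I, transvectionGL hja.symm x ∈ ElemRel n R I := by
    obtain rfl | hjb := eq_or_ne j b
    · exact h
    · exact fun x => transvectionGL_mem_elemRel_of_col hja.symm hab hjb.symm h
  obtain rfl | hia := eq_or_ne i a
  · exact haj
  · exact fun x => transvectionGL_mem_elemRel_of_row hij hia hja.symm haj

lemma transvectionGL_mem_elemRel_of_forall (hn : 2 < n) {a b : Fin n} (hab : a ≠ b)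
    (h : ∀ x ∈ I, transvectionGL hab x ∈ ElemRel n R I) (hij : i ≠ j) :
    ∀ x ∈ I, transvectionGL hij x ∈ ElemRel n R I := by
  by_cases hja : j = a
  · obtain ⟨c, hca, hcb⟩ := Fin.exists_ne_and_ne_of_two_lt a b hn
    have hc : ∀ x ∈ I, transvectionGL hcb x ∈ ElemRel n R I :=
      fun x => transvectionGL_mem_elemRel_of_row hcb hca hab h
    exact transvectionGL_mem_elemRel_of_ne_fst hcb hij (hja ▸ hca.symm) hc
  · exact transvectionGL_mem_elemRel_of_ne_fst hab hij hja h

lemma transvectionGL_mem_elemRel (hn : 2 < n) (hij : i ≠ j) {x : R} (hx : x ∈ I) :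
    transvectionGL hij x ∈ ElemRel n R I := by
  have h10 : (⟨1, by omega⟩ : Fin n) ≠ ⟨0, by omega⟩ := by simp
  refine transvectionGL_mem_elemRel_of_forall hn h10 (fun y hy => ?_) hij x hx
  exact Subgroup.subset_closure
    ⟨1, one_mem _, transvectionGL h10 y, _, _, rfl, rfl, ⟨y, hy, rfl⟩, by group⟩

lemma mul_inv_map_mem_elemRel (hn : 2 < n) {φ : R →+* R} (hφ : ∀ x, φ x - x ∈ I)
    {g : GL (Fin n) R} (hg : g ∈ Elem n R) :
    g * (GeneralLinearGroup.map φ g)⁻¹ ∈ ElemRel n R I := by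
  induction hg using Subgroup.closure_induction with
  | mem g hg =>
    obtain ⟨i, j, hij, c, hc⟩ := hg
    obtain rfl : g = transvectionGL hij c := Units.ext hc
    rw [map_transvectionGL, inv_transvectionGL, transvectionGL_mul_transvectionGL,
      ← sub_eq_add_neg, ← neg_sub]
    exact transvectionGL_mem_elemRel hn hij (I.neg_mem (hφ c))
  | one => simp
  | mul x y hx _ px py =>
    have h : x * y * (GeneralLinearGroup.map φ (x * y))⁻¹ =
        x * (y * (GeneralLinearGroup.map φ y)⁻¹) * x⁻¹ *
          (x * (GeneralLinearGroup.map φ x)⁻¹) := by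
      rw [map_mul]; group
    rw [h]
    exact mul_mem (conj_mem_elemRel hx py) px
  | inv x hx px =>
    have h : x⁻¹ * (GeneralLinearGroup.map φ x⁻¹)⁻¹ =
        x⁻¹ * (x * (GeneralLinearGroup.map φ x)⁻¹)⁻¹ * x⁻¹⁻¹ := by
      rw [map_inv]; group
    rw [h]
    exact conj_mem_elemRel (inv_mem hx) (inv_mem px)

end Elementary

section RowE1

variable {R S : Type*} [CommRing R] [CommRing S] {n : ℕ}

lemma comp_eq_rowE1_of_mem_umRel {I : Ideal R} {φ : R →+* S} (hφ : I ≤ RingHom.ker φ)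
    {v : Fin n → R} (hv : v ∈ UmRel n R I) :
    φ ∘ v = rowE1 n S := by
  funext i
  have hvi := hv.2 i
  split_ifs at hvi with hi
  · simpa [rowE1, hi, sub_eq_zero] using hφ hvi
  · simpa [rowE1, hi] using hφ hvi

lemma comp_rowE1 (φ : R →+* S) : φ ∘ rowE1 n R = rowE1 n S := by
  funext i
  by_cases hi : i.val = 0 <;> simp [rowE1, hi]

lemma rowE1_vecMul_map_eq {φ : R →+* S} {v : Fin n → R} {g : GL (Fin n) R}
    (hv : φ ∘ v = rowE1 n S)
    (h : v ᵥ* (g : Matrix (Fin n) (Fin n) R) = rowE1 n R) :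
    rowE1 n S ᵥ* (GeneralLinearGroup.map φ g : Matrix (Fin n) (Fin n) S) = rowE1 n S := by
  funext j
  have hj := RingHom.map_vecMul φ (g : Matrix (Fin n) (Fin n) R) v j
  rw [h, hv] at hj
  rw [← congrFun (comp_rowE1 φ) j]
  exact hj.symm

end RowE1

/-- if the quotient map `q : R → R/I` is a retract (there is a ring
homomorphism `f : R/I → R` with `q ∘ f = id`), `n = m + 3 ≥ 3`, and
`v ∈ Um_n(R, I)` satisfies `v·ε = e₁` for some `ε ∈ E_n(R)`, then `v·ε' = e₁`
for some `ε' ∈ E_n(R, I)`. -/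
theorem trivial_absolute_implies_trivial_relative_of_retract
    (R : Type*) [CommRing R] (I : Ideal R)
    (f : R ⧸ I →+* R)
    (hf : (Ideal.Quotient.mk I).comp f = RingHom.id (R ⧸ I))
    (m : ℕ) (v : Fin (m + 3) → R)
    (hv : v ∈ UmRel (m + 3) R I)
    (ε : GL (Fin (m + 3)) R) (hε : ε ∈ Elem (m + 3) R)
    (h : Matrix.vecMul v (ε : Matrix (Fin (m + 3)) (Fin (m + 3)) R) = rowE1 (m + 3) R) :
    ∃ ε' ∈ ElemRel (m + 3) R I,
      Matrix.vecMul v (ε' : Matrix (Fin (m + 3)) (Fin (m + 3)) R) = rowE1 (m + 3) R := by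
  set φ : R →+* R := f.comp (Ideal.Quotient.mk I)
  have hφ : ∀ x, φ x - x ∈ I := fun x =>
    Ideal.Quotient.eq.mp (RingHom.congr_fun hf (Ideal.Quotient.mk I x))
  have hφv : φ ∘ v = rowE1 (m + 3) R := comp_eq_rowE1_of_mem_umRel
    (fun x hx => by simp [φ, Ideal.Quotient.eq_zero_iff_mem.mpr hx]) hv
  refine ⟨ε * (GeneralLinearGroup.map φ ε)⁻¹, mul_inv_map_mem_elemRel (by omega) hφ hε, ?_⟩
  rw [Units.val_mul, ← vecMul_vecMul, h, vecMul_inv_eq_of_vecMul_eq (rowE1_vecMul_map_eq hφv h)]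
end
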